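/- Combined coarse-to-fine upper bound: let μ, ν be probability measures on a finite metric space X, let π̂ be any nonnegative matrix with Σ_{ij} π̂_{ij} = 1 and marginals μ̂ = π̂ 1, ν̂ = π̂^⊤ 1. Then W_p(μ,ν) ≤ ⟨π̂, C⟩^{1/p} + 2^{1-1/p}⟨w, |μ̂-μ|⟩^{1/p} + 2^{1-1/p}⟨w, |ν-ν̂|⟩^{1/p}, where C_{ij} = ρ(x_i,x_j)^p and w_i = ρ(x̄, x_i)^p for a fixed x̄ ∈ X. -/

import Mathlib

/-!
Plans `π₁ : μ → α` and `π₂ : α → β` glue to `σ(x, y, z) = π₁(x, y) π₂(y, z) / α(y)` on `X³`, whose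
`(x, z)`-marginal is a plan `μ → β`. By `ρ(x, z) ≤ ρ(x, y) + ρ(y, z)` and Minkowski's inequality in
`L^p(σ)`, the `p`-th root of the cost is subadditive under this composition; compose
`μ → μ̂ → ν̂ → ν` with `π̂` in the middle. The outer plan `μ → μ̂` keeps the common mass
`min(μ, μ̂)` in place and moves the excess `(μ - μ̂)₊` to `(μ̂ - μ)₊` by their normalized product;
routing every move through `x̄` and using `(a + b)^p ≤ 2^(p-1) (a^p + b^p)` bounds its cost by
`2^(p-1) ⟨w, |μ̂ - μ|⟩`, and likewise for `ν̂ → ν`.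
-/

open Finset

def IsCoupling {X Y : Type*} [Fintype X] [Fintype Y]
    (π : X → Y → ℝ) (μ : X → ℝ) (ν : Y → ℝ) : Prop :=
  (∀ i j, 0 ≤ π i j) ∧ (∀ i, ∑ j, π i j = μ i) ∧ (∀ j, ∑ i, π i j = ν j)

def transportCost {X Y : Type*} [Fintype X] [Fintype Y]
    (π : X → Y → ℝ) (C : X → Y → ℝ) : ℝ :=
  ∑ i, ∑ j, π i j * C i j

noncomputable def OTCost {X Y : Type*} [Fintype X] [Fintype Y]
    (C : X → Y → ℝ) (μ : X → ℝ) (ν : Y → ℝ) : ℝ :=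
  sInf {t : ℝ | ∃ π, IsCoupling π μ ν ∧ t = transportCost π C}

noncomputable def Wp {X : Type*} [Fintype X] [MetricSpace X]
    (p : ℝ) (μ ν : X → ℝ) : ℝ :=
  (OTCost (fun x y => dist x y ^ p) μ ν) ^ (1 / p)

namespace IsCoupling

variable {X Y : Type*} [Fintype X] [Fintype Y]
  {π : X → Y → ℝ} {μ : X → ℝ} {ν : Y → ℝ}

lemma eq_zero_of_left_eq_zero (h : IsCoupling π μ ν) {x : X} (hx : μ x = 0) (y : Y) :
    π x y = 0 :=
  (sum_eq_zero_iff_of_nonneg fun y _ => h.1 x y).1 ((h.2.1 x).trans hx) y (mem_univ y)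

lemma eq_zero_of_right_eq_zero (h : IsCoupling π μ ν) (x : X) {y : Y} (hy : ν y = 0) :
    π x y = 0 :=
  (sum_eq_zero_iff_of_nonneg fun x _ => h.1 x y).1 ((h.2.2 y).trans hy) x (mem_univ x)

lemma add {π' : X → Y → ℝ} {μ' : X → ℝ} {ν' : Y → ℝ} (h : IsCoupling π μ ν)
    (h' : IsCoupling π' μ' ν') :
    IsCoupling (fun x y => π x y + π' x y) (fun x => μ x + μ' x) (fun y => ν y + ν' y) :=
  ⟨fun x y => add_nonneg (h.1 x y) (h'.1 x y),
    fun x => by rw [sum_add_distrib, h.2.1, h'.2.1],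
    fun y => by rw [sum_add_distrib, h.2.2, h'.2.2]⟩

lemma sum_mul_add (h : IsCoupling π μ ν) (f : X → ℝ) (g : Y → ℝ) :
    ∑ x, ∑ y, π x y * (f x + g y) = ∑ x, μ x * f x + ∑ y, ν y * g y := by
  simp only [mul_add, sum_add_distrib, ← sum_mul, ← h.2.1]
  rw [sum_comm (f := fun x y => π x y * g y)]
  simp only [← sum_mul, h.2.2]

end IsCoupling

section Couplings

variable {X Y Z : Type*} [Fintype X] [Fintype Y] [Fintype Z]

lemma isCoupling_diag [DecidableEq X] {m : X → ℝ} (hm : ∀ x, 0 ≤ m x) :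
    IsCoupling (fun x y => if x = y then m x else 0) m m :=
  ⟨fun x y => by dsimp only; split_ifs <;> simp [hm], fun x => by simp,
    fun y => by simp [sum_ite_eq']⟩

lemma isCoupling_prod {a : X → ℝ} {b : Y → ℝ} (ha : ∀ x, 0 ≤ a x) (hb : ∀ y, 0 ≤ b y)
    (hab : ∑ x, a x = ∑ y, b y) :
    IsCoupling (fun x y => a x * b y / ∑ x, a x) a b := by
  have ha0 : ∑ x, a x = 0 → ∀ x, a x = 0 := fun h x =>
    (sum_eq_zero_iff_of_nonneg fun x _ => ha x).1 h x (mem_univ x)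
  have hb0 : ∑ x, a x = 0 → ∀ y, b y = 0 := fun h y =>
    (sum_eq_zero_iff_of_nonneg fun y _ => hb y).1 (hab ▸ h) y (mem_univ y)
  refine ⟨fun x y => div_nonneg (mul_nonneg (ha x) (hb y)) (sum_nonneg fun x _ => ha x),
    fun x => ?_, fun y => ?_⟩
  · rw [← sum_div, ← mul_sum, ← hab]
    exact mul_div_cancel_of_imp fun h => ha0 h x
  · rw [← sum_div, ← sum_mul]
    exact mul_div_cancel_left_of_imp fun h => hb0 h y

-- Where `α y = 0` both plans vanish, so the junk value `_ / 0 = 0` is harmless.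
noncomputable def glue (π₁ : X → Y → ℝ) (π₂ : Y → Z → ℝ) (α : Y → ℝ) (x : X) (y : Y) (z : Z) :
    ℝ :=
  π₁ x y * π₂ y z / α y

noncomputable def couplingComp (π₁ : X → Y → ℝ) (π₂ : Y → Z → ℝ) (α : Y → ℝ) (x : X) (z : Z) :
    ℝ :=
  ∑ y, glue π₁ π₂ α x y z

variable {π₁ : X → Y → ℝ} {π₂ : Y → Z → ℝ} {μ : X → ℝ} {α : Y → ℝ} {β : Z → ℝ}

lemma glue_nonneg (h₁ : IsCoupling π₁ μ α) (h₂ : IsCoupling π₂ α β) (x : X) (y : Y) (z : Z) :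
    0 ≤ glue π₁ π₂ α x y z :=
  div_nonneg (mul_nonneg (h₁.1 x y) (h₂.1 y z)) ((h₁.2.2 y) ▸ sum_nonneg fun x _ => h₁.1 x y)

lemma sum_glue_right (h₁ : IsCoupling π₁ μ α) (h₂ : IsCoupling π₂ α β) (x : X) (y : Y) :
    ∑ z, glue π₁ π₂ α x y z = π₁ x y := by
  simp only [glue]
  rw [← sum_div, ← mul_sum, h₂.2.1]
  exact mul_div_cancel_of_imp (h₁.eq_zero_of_right_eq_zero x)

lemma sum_glue_left (h₁ : IsCoupling π₁ μ α) (h₂ : IsCoupling π₂ α β) (y : Y) (z : Z) :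
    ∑ x, glue π₁ π₂ α x y z = π₂ y z := by
  simp only [glue]
  rw [← sum_div, ← sum_mul, h₁.2.2]
  exact mul_div_cancel_left_of_imp fun hy => h₂.eq_zero_of_left_eq_zero hy z

lemma IsCoupling.comp (h₁ : IsCoupling π₁ μ α) (h₂ : IsCoupling π₂ α β) :
    IsCoupling (couplingComp π₁ π₂ α) μ β := by
  refine ⟨fun x z => sum_nonneg fun y _ => glue_nonneg h₁ h₂ x y z, fun x => ?_, fun z => ?_⟩
  · simp only [couplingComp]
    rw [sum_comm]
    simp only [sum_glue_right h₁ h₂, h₁.2.1]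
  · simp only [couplingComp]
    rw [sum_comm]
    simp only [sum_glue_left h₁ h₂, h₂.2.2]

end Couplings

section TransportCost

variable {X Y : Type*} [Fintype X] [Fintype Y] {π : X → Y → ℝ} {C : X → Y → ℝ}
  {μ : X → ℝ} {ν : Y → ℝ}

lemma transportCost_nonneg (hπ : ∀ x y, 0 ≤ π x y) (hC : ∀ x y, 0 ≤ C x y) :
    0 ≤ transportCost π C :=
  sum_nonneg fun x _ => sum_nonneg fun y _ => mul_nonneg (hπ x y) (hC x y)

lemma transportCost_mono (hπ : ∀ x y, 0 ≤ π x y) {C' : X → Y → ℝ} (hC : ∀ x y, C x y ≤ C' x y) :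
    transportCost π C ≤ transportCost π C' :=
  sum_le_sum fun x _ => sum_le_sum fun y _ => mul_le_mul_of_nonneg_left (hC x y) (hπ x y)

lemma transportCost_add_left (π' : X → Y → ℝ) :
    transportCost (fun x y => π x y + π' x y) C = transportCost π C + transportCost π' C := by
  simp only [transportCost, add_mul, sum_add_distrib]

lemma OTCost_le_transportCost (hC : ∀ x y, 0 ≤ C x y) (h : IsCoupling π μ ν) :
    OTCost C μ ν ≤ transportCost π C :=
  csInf_le ⟨0, by rintro t ⟨π', hπ', rfl⟩; exact transportCost_nonneg hπ'.1 hC⟩ ⟨π, h, rfl⟩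

lemma OTCost_nonneg (hC : ∀ x y, 0 ≤ C x y) (h : IsCoupling π μ ν) : 0 ≤ OTCost C μ ν :=
  le_csInf ⟨_, π, h, rfl⟩ fun _ ⟨_, hπ', ht⟩ => ht ▸ transportCost_nonneg hπ'.1 hC

end TransportCost

lemma Real.weighted_Lp_add_le_of_nonneg {ι : Type*} (s : Finset ι) {p : ℝ} (hp : 1 ≤ p)
    {w f g : ι → ℝ} (hw : ∀ i ∈ s, 0 ≤ w i) (hf : ∀ i ∈ s, 0 ≤ f i) (hg : ∀ i ∈ s, 0 ≤ g i) :
    (∑ i ∈ s, w i * (f i + g i) ^ p) ^ (1 / p)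
      ≤ (∑ i ∈ s, w i * f i ^ p) ^ (1 / p) + (∑ i ∈ s, w i * g i ^ p) ^ (1 / p) := by
  have hpow : ∀ i ∈ s, ∀ t, 0 ≤ t → (w i ^ (1 / p) * t) ^ p = w i * t ^ p := fun i hi t ht => by
    rw [Real.mul_rpow (Real.rpow_nonneg (hw i hi) _) ht, ← Real.rpow_mul (hw i hi),
      one_div_mul_cancel (by positivity), Real.rpow_one]
  have h := Real.Lp_add_le_of_nonneg (s := s) (f := fun i => w i ^ (1 / p) * f i)
    (g := fun i => w i ^ (1 / p) * g i) hp
    (fun i hi => mul_nonneg (Real.rpow_nonneg (hw i hi) _) (hf i hi))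
    (fun i hi => mul_nonneg (Real.rpow_nonneg (hw i hi) _) (hg i hi))
  simp only [← mul_add] at h
  rwa [sum_congr rfl fun i hi => hpow i hi _ (add_nonneg (hf i hi) (hg i hi)),
    sum_congr rfl fun i hi => hpow i hi _ (hf i hi),
    sum_congr rfl fun i hi => hpow i hi _ (hg i hi)] at h

lemma Real.add_rpow_le_two_rpow_mul {p : ℝ} (hp : 1 ≤ p) {a b : ℝ} (ha : 0 ≤ a) (hb : 0 ≤ b) :
    (a + b) ^ p ≤ 2 ^ (p - 1) * (a ^ p + b ^ p) := by
  lift a to NNReal using ha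
  lift b to NNReal using hb
  exact_mod_cast NNReal.rpow_add_le_mul_rpow_add_rpow a b hp

lemma Fintype.sum_prod_prod_type {X Y Z : Type*} [Fintype X] [Fintype Y] [Fintype Z]
    (F : X → Y → Z → ℝ) : ∑ q : X × Y × Z, F q.1 q.2.1 q.2.2 = ∑ x, ∑ y, ∑ z, F x y z := by
  simp only [Fintype.sum_prod_type]

lemma rpow_dist_le_two_rpow_mul {X : Type*} [MetricSpace X] {p : ℝ} (hp : 1 ≤ p) (o x y : X) :
    dist x y ^ p ≤ 2 ^ (p - 1) * (dist o x ^ p + dist o y ^ p) :=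
  calc dist x y ^ p ≤ (dist o x + dist o y) ^ p :=
        Real.rpow_le_rpow dist_nonneg (dist_comm o x ▸ dist_triangle x o y) (by linarith)
    _ ≤ 2 ^ (p - 1) * (dist o x ^ p + dist o y ^ p) :=
        Real.add_rpow_le_two_rpow_mul hp dist_nonneg dist_nonneg

section Metric

variable {X : Type*} [Fintype X] [MetricSpace X] {p : ℝ}

lemma Wp_le_transportCost_rpow (hp : 0 ≤ p) {π : X → X → ℝ} {μ ν : X → ℝ}
    (h : IsCoupling π μ ν) :
    Wp p μ ν ≤ transportCost π (fun x y => dist x y ^ p) ^ (1 / p) :=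
  have hC (x y : X) : 0 ≤ dist x y ^ p := Real.rpow_nonneg dist_nonneg p
  Real.rpow_le_rpow (OTCost_nonneg hC h) (OTCost_le_transportCost hC h) (by positivity)

lemma transportCost_couplingComp_rpow_le (hp : 1 ≤ p) {π₁ π₂ : X → X → ℝ} {μ α β : X → ℝ}
    (h₁ : IsCoupling π₁ μ α) (h₂ : IsCoupling π₂ α β) :
    transportCost (couplingComp π₁ π₂ α) (fun x y => dist x y ^ p) ^ (1 / p)
      ≤ transportCost π₁ (fun x y => dist x y ^ p) ^ (1 / p)
        + transportCost π₂ (fun x y => dist x y ^ p) ^ (1 / p) := by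
  set σ : X × X × X → ℝ := fun q => glue π₁ π₂ α q.1 q.2.1 q.2.2
  have hσ (q : X × X × X) : 0 ≤ σ q := glue_nonneg h₁ h₂ _ _ _
  have hcost : transportCost (couplingComp π₁ π₂ α) (fun x y => dist x y ^ p)
      = ∑ q, σ q * dist q.1 q.2.2 ^ p := by
    rw [Fintype.sum_prod_prod_type (fun x y z => glue π₁ π₂ α x y z * dist x z ^ p)]
    simp only [transportCost, couplingComp, sum_mul]
    exact sum_congr rfl fun x _ => sum_comm
  have hcost₁ : transportCost π₁ (fun x y => dist x y ^ p) = ∑ q, σ q * dist q.1 q.2.1 ^ p := by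
    rw [Fintype.sum_prod_prod_type (fun x y z => glue π₁ π₂ α x y z * dist x y ^ p)]
    simp only [transportCost, ← sum_mul, sum_glue_right h₁ h₂]
  have hcost₂ : transportCost π₂ (fun x y => dist x y ^ p)
      = ∑ q, σ q * dist q.2.1 q.2.2 ^ p := by
    rw [Fintype.sum_prod_prod_type (fun x y z => glue π₁ π₂ α x y z * dist y z ^ p), sum_comm]
    simp only [transportCost, sum_comm (γ := X) (f := fun x z => glue π₁ π₂ α x _ z * _),
      ← sum_mul, sum_glue_left h₁ h₂]
  have htriangle : ∑ q, σ q * dist q.1 q.2.2 ^ p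
      ≤ ∑ q, σ q * (dist q.1 q.2.1 + dist q.2.1 q.2.2) ^ p :=
    sum_le_sum fun q _ => mul_le_mul_of_nonneg_left
      (Real.rpow_le_rpow dist_nonneg (dist_triangle _ _ _) (by linarith)) (hσ q)
  rw [hcost, hcost₁, hcost₂]
  exact (Real.rpow_le_rpow (sum_nonneg fun q _ => mul_nonneg (hσ q) (by positivity)) htriangle
    (by positivity)).trans (Real.weighted_Lp_add_le_of_nonneg _ hp (fun q _ => hσ q)
      (fun _ _ => dist_nonneg) (fun _ _ => dist_nonneg))

lemma exists_isCoupling_transportCost_le (hp : 1 ≤ p) (o : X) {μ ν : X → ℝ}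
    (hμ : ∀ x, 0 ≤ μ x) (hν : ∀ x, 0 ≤ ν x) (hsum : ∑ x, μ x = ∑ x, ν x) :
    ∃ π, IsCoupling π μ ν ∧ transportCost π (fun x y => dist x y ^ p)
      ≤ 2 ^ (p - 1) * ∑ x, dist o x ^ p * |ν x - μ x| := by
  classical
  set m : X → ℝ := fun x => min (μ x) (ν x)
  set a : X → ℝ := fun x => μ x - m x
  set b : X → ℝ := fun x => ν x - m x
  have ha (x : X) : 0 ≤ a x := sub_nonneg.2 (min_le_left _ _)
  have hb (x : X) : 0 ≤ b x := sub_nonneg.2 (min_le_right _ _)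
  have hab : ∑ x, a x = ∑ x, b x := by simp only [a, b, sum_sub_distrib, hsum]
  have hdiag := isCoupling_diag (m := m) fun x => le_min (hμ x) (hν x)
  have hprod := isCoupling_prod ha hb hab
  have hπ : IsCoupling (fun x y => (if x = y then m x else 0) + a x * b y / ∑ x, a x) μ ν := by
    convert hdiag.add hprod using 1 <;> funext x <;> simp only [a, b, add_sub_cancel]
  refine ⟨_, hπ, ?_⟩
  have hdiag_cost : transportCost (fun x y => if x = y then m x else 0)
      (fun x y => dist x y ^ p) = 0 :=
    sum_eq_zero fun x _ => sum_eq_zero fun y _ => by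
      dsimp only
      split_ifs with h
      · simp [h, Real.zero_rpow (by linarith : p ≠ 0)]
      · simp
  have hexcess (x : X) : a x + b x = |ν x - μ x| := by
    rw [abs_sub_comm, ← max_sub_min_eq_abs']
    linarith [min_add_max (μ x) (ν x)]
  calc transportCost (fun x y => (if x = y then m x else 0) + a x * b y / ∑ x, a x)
        (fun x y => dist x y ^ p)
      = transportCost (fun x y => a x * b y / ∑ x, a x) (fun x y => dist x y ^ p) := by
        rw [transportCost_add_left, hdiag_cost, zero_add]
    _ ≤ transportCost (fun x y => a x * b y / ∑ x, a x)
          (fun x y => 2 ^ (p - 1) * (dist o x ^ p + dist o y ^ p)) :=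
        transportCost_mono hprod.1 (rpow_dist_le_two_rpow_mul hp o)
    _ = 2 ^ (p - 1) * ∑ x, dist o x ^ p * |ν x - μ x| := by
        simp only [transportCost, mul_left_comm _ (2 ^ (p - 1) : ℝ), ← mul_sum,
          hprod.sum_mul_add, ← sum_add_distrib]
        exact congr_arg _ (sum_congr rfl fun x _ => by rw [← hexcess]; ring)

lemma exists_isCoupling_transportCost_rpow_le (hp : 1 ≤ p) (o : X) {μ ν : X → ℝ}
    (hμ : ∀ x, 0 ≤ μ x) (hν : ∀ x, 0 ≤ ν x) (hsum : ∑ x, μ x = ∑ x, ν x) :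
    ∃ π, IsCoupling π μ ν ∧ transportCost π (fun x y => dist x y ^ p) ^ (1 / p)
      ≤ 2 ^ (1 - 1 / p) * (∑ x, dist o x ^ p * |ν x - μ x|) ^ (1 / p) := by
  obtain ⟨π, hπ, hcost⟩ := exists_isCoupling_transportCost_le hp o hμ hν hsum
  refine ⟨π, hπ, ?_⟩
  have hp0 : 0 < p := by linarith
  have hT : 0 ≤ ∑ x, dist o x ^ p * |ν x - μ x| := by positivity
  calc transportCost π (fun x y => dist x y ^ p) ^ (1 / p)
      ≤ (2 ^ (p - 1) * ∑ x, dist o x ^ p * |ν x - μ x|) ^ (1 / p) :=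
        Real.rpow_le_rpow (transportCost_nonneg hπ.1 fun _ _ => by positivity) hcost
          (by positivity)
    _ = 2 ^ (1 - 1 / p) * (∑ x, dist o x ^ p * |ν x - μ x|) ^ (1 / p) := by
        rw [Real.mul_rpow (by positivity) hT, ← Real.rpow_mul zero_le_two]
        congr 2
        field_simp

end Metric

theorem coarse_to_fine_upper_bound
    {X : Type*} [Fintype X] [MetricSpace X] (p : ℝ) (hp : 1 ≤ p) (xbar : X)
    (μ ν : X → ℝ)
    (hμ : (∀ x, 0 ≤ μ x) ∧ ∑ x, μ x = 1)
    (hν : (∀ x, 0 ≤ ν x) ∧ ∑ x, ν x = 1)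
    (πhat : X → X → ℝ)
    (hπ : (∀ x y, 0 ≤ πhat x y) ∧ ∑ x, ∑ y, πhat x y = 1)
    (μhat νhat : X → ℝ)
    (hμhat : ∀ x, μhat x = ∑ y, πhat x y)
    (hνhat : ∀ y, νhat y = ∑ x, πhat x y) :
    Wp p μ ν ≤ (transportCost πhat (fun x y => dist x y ^ p)) ^ (1 / p)
      + 2 ^ (1 - 1 / p) * (∑ x, dist xbar x ^ p * |μhat x - μ x|) ^ (1 / p)
      + 2 ^ (1 - 1 / p) * (∑ x, dist xbar x ^ p * |ν x - νhat x|) ^ (1 / p) := by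
  have hπhat : IsCoupling πhat μhat νhat :=
    ⟨hπ.1, fun x => (hμhat x).symm, fun y => (hνhat y).symm⟩
  have hμhat_sum : ∑ x, μhat x = 1 := by simp only [hμhat, hπ.2]
  have hνhat_sum : ∑ y, νhat y = 1 := by simp only [hνhat]; rw [sum_comm, hπ.2]
  obtain ⟨π₁, h₁, hcost₁⟩ := exists_isCoupling_transportCost_rpow_le hp xbar hμ.1
    (fun x => hμhat x ▸ sum_nonneg fun y _ => hπ.1 x y) (hμ.2.trans hμhat_sum.symm)
  obtain ⟨π₃, h₃, hcost₃⟩ := exists_isCoupling_transportCost_rpow_le hp xbar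
    (fun y => hνhat y ▸ sum_nonneg fun x _ => hπ.1 x y) hν.1 (hνhat_sum.trans hν.2.symm)
  calc Wp p μ ν
      ≤ transportCost (couplingComp (couplingComp π₁ πhat μhat) π₃ νhat)
          (fun x y => dist x y ^ p) ^ (1 / p) :=
        Wp_le_transportCost_rpow (by linarith) ((h₁.comp hπhat).comp h₃)
    _ ≤ transportCost π₁ (fun x y => dist x y ^ p) ^ (1 / p)
          + transportCost πhat (fun x y => dist x y ^ p) ^ (1 / p)
          + transportCost π₃ (fun x y => dist x y ^ p) ^ (1 / p) :=
        (transportCost_couplingComp_rpow_le hp (h₁.comp hπhat) h₃).trans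
          (add_le_add_left (transportCost_couplingComp_rpow_le hp h₁ hπhat) _)
    _ ≤ _ := by linarith
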